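/- Let F(Ω) and F(Ω,E) be ε-compatible function spaces (i.e., S : F(Ω) ε E → F(Ω,E), S(u)(x)=u(δₓ), is an isomorphism), let (fₙ) be an equicontinuous Schauder basis of F(Ω) with coefficient functionals (λₙ^K), and let λₙ^E : F(Ω,E) → E satisfy λₙ^E(S(u)) = u(λₙ^K) for all u and n. Then every f ∈ F(Ω,E) has the convergent series representation f = Σ_{n=1}^{∞} λₙ^E(f)·fₙ in F(Ω,E). -/

import Mathlib

open Filter Topology

/-- The collection of absolutely convex compact subsets of `F`. -/
def kappaSets (𝕜 F : Type*) [RCLike 𝕜] [AddCommGroup F] [Module 𝕜 F] [Module ℝ F]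
    [UniformSpace F] : Set (Set F) :=
  {s : Set F | IsCompact s ∧ Balanced 𝕜 s ∧ Convex ℝ s}

/-- `F'_κ`. -/
abbrev DualKappa (𝕜 F : Type*) [RCLike 𝕜] [AddCommGroup F] [Module 𝕜 F] [Module ℝ F]
    [UniformSpace F] [IsUniformAddGroup F] [ContinuousSMul 𝕜 F] :=
  UniformConvergenceCLM (RingHom.id 𝕜) 𝕜 (kappaSets 𝕜 F)

/-- Schwartz' ε-product `F ε E = L_e(F'_κ, E)`. -/
abbrev EpsilonProduct (𝕜 F E : Type*) [RCLike 𝕜]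
    [AddCommGroup F] [Module 𝕜 F] [UniformSpace F] [IsUniformAddGroup F]
    [ContinuousSMul 𝕜 F] [Module ℝ F]
    [AddCommGroup E] [Module 𝕜 E] [UniformSpace E] [IsUniformAddGroup E]
    [ContinuousSMul 𝕜 E] :=
  UniformConvergenceCLM (RingHom.id 𝕜) E
    {S : Set (DualKappa 𝕜 F) | Equicontinuous (fun φ : S => (φ.1 : F → 𝕜))}

open Set
open scoped UniformConvergenceCLM Uniformity

/-! Put `u = S⁻¹ g` and let `Pₖ x = ∑_{n<k} λₙᴷ(x) fₙ`. Each `Pₖ` maps absolutely convex compact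
sets to absolutely convex compact sets, so its transpose `Pₖᵗ` acts continuously on `F(Ω)'_κ`
and `u ∘ Pₖᵗ ∈ F(Ω) ε E`; evaluating at `δₓ` gives `S(u ∘ Pₖᵗ)(x) = ∑_{n<k} fₙ(x) λₙᴱ(g)`.
Being equicontinuous and pointwise convergent to the identity, `(Pₖ)` converges uniformly on
compact sets, so `Pₖᵗ φ → φ` in `F(Ω)'_κ` uniformly for `φ` in an equicontinuous set. Hence
`u ∘ Pₖᵗ → u` in `F(Ω) ε E`, and applying `S` gives the series representation of `g`. -/

theorem EquicontinuousOn.tendstoUniformlyOn_of_tendsto {ι X α : Type*} [TopologicalSpace X]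
    [UniformSpace α] {F : ι → X → α} {f : X → α} {l : Filter ι} {K : Set X}
    (hF : EquicontinuousOn F K) (hK : IsCompact K)
    (hlim : ∀ x ∈ K, Tendsto (F · x) l (𝓝 (f x))) : TendstoUniformlyOn F f l K := by
  have hpi : Tendsto ((⋃₀ {K}).domRestrict ∘ F) l (𝓝 ((⋃₀ {K}).domRestrict f)) :=
    tendsto_pi_nhds.2 fun x => hlim x (by simpa using x.2)
  have := (EquicontinuousOn.tendsto_uniformOnFun_iff_pi' (by simpa using hK)
    (by simpa using hF) l f).2 hpi
  exact UniformOnFun.tendsto_iff_tendstoUniformlyOn.1 this K rfl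

theorem tendstoUniformlyOn_iff_tendsto_sub {ι X G : Type*} [UniformSpace G] [AddGroup G]
    [IsUniformAddGroup G] {F : ι → X → G} {f : X → G} {l : Filter ι} {s : Set X} :
    TendstoUniformlyOn F f l s ↔ Tendsto (fun p => F p.1 p.2 - f p.2) (l ×ˢ 𝓟 s) (𝓝 0) := by
  rw [tendstoUniformlyOn_iff_tendsto, uniformity_eq_comap_nhds_zero G, tendsto_comap_iff]
  rfl

theorem Balanced.image {𝕜 E F G : Type*} [SeminormedRing 𝕜] [SMul 𝕜 E] [SMul 𝕜 F]
    [FunLike G E F] [MulActionHomClass G 𝕜 E F] {s : Set E} (hs : Balanced 𝕜 s) (f : G) :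
    Balanced 𝕜 (f '' s) := fun a ha => by
  rw [← image_smul_set]
  exact image_mono (hs a ha)

theorem mapsTo_image_kappaSets {𝕜 F : Type*} [RCLike 𝕜] [AddCommGroup F] [Module 𝕜 F]
    [Module ℝ F] [IsScalarTower ℝ 𝕜 F] [UniformSpace F] (P : F →L[𝕜] F) :
    MapsTo (P '' ·) (kappaSets 𝕜 F) (kappaSets 𝕜 F) := fun _ ⟨hc, hb, hv⟩ =>
  ⟨hc.image P.continuous, hb.image P, hv.linear_image (P.toLinearMap.restrictScalars ℝ)⟩

theorem UniformConvergenceCLM.tendstoUniformlyOn_of_apply_eq_comp {𝕜 E F ι : Type*}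
    [NormedField 𝕜] [AddCommGroup E] [Module 𝕜 E] [UniformSpace E] [IsUniformAddGroup E]
    [AddCommGroup F] [Module 𝕜 F] [UniformSpace F] [IsUniformAddGroup F] {𝔖 : Set (Set E)}
    {l : Filter ι} {H : Set (E →Lᵤ[𝕜, 𝔖] F)} (hH : EquicontinuousAt (fun φ : H => ⇑φ.1) 0)
    {P : ι → E → E} (hP : ∀ K ∈ 𝔖, TendstoUniformlyOn P id l K)
    {ψ : ι → (E →Lᵤ[𝕜, 𝔖] F) → (E →Lᵤ[𝕜, 𝔖] F)} (hψ : ∀ i φ x, ψ i φ x = φ (P i x)) :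
    TendstoUniformlyOn ψ id l H := by
  rw [tendstoUniformlyOn_iff_tendsto_sub, UniformConvergenceCLM.nhds_zero_eq]
  simp only [tendsto_iInf, tendsto_principal]
  intro K hK V hV
  have hV' : {p : F × F | p.2 - p.1 ∈ V} ∈ 𝓤 F := by
    rw [uniformity_eq_comap_nhds_zero F]
    exact preimage_mem_comap hV
  have hO : ∀ᶠ z in 𝓝 (0 : E), ∀ φ : H, φ.1 z ∈ V := by
    filter_upwards [hH _ hV'] with z hz φ
    simpa using hz φ
  have hPK := (tendstoUniformlyOn_iff_tendsto_sub.1 (hP K hK)).eventually hO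
  rw [eventually_prod_principal_iff] at hPK ⊢
  filter_upwards [hPK] with i hi φ hφ x hx
  simpa [hψ, ← map_sub] using hi x hx ⟨φ, hφ⟩

section Schauder

variable {𝕜 F : Type*} [RCLike 𝕜] [AddCommGroup F] [Module 𝕜 F] [TopologicalSpace F]
  [ContinuousAdd F] [ContinuousSMul 𝕜 F]

def schauderPartialSum (f : ℕ → F) (lam : ℕ → F →L[𝕜] 𝕜) (k : ℕ) : F →L[𝕜] F :=
  ∑ n ∈ Finset.range k, (lam n).smulRight (f n)

theorem coe_schauderPartialSum (f : ℕ → F) (lam : ℕ → F →L[𝕜] 𝕜) (k : ℕ) :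
    ⇑(schauderPartialSum f lam k) = fun x => ∑ n ∈ Finset.range k, lam n x • f n := by
  ext x
  simp [schauderPartialSum]

end Schauder

section Transpose

variable {𝕜 F : Type*} [RCLike 𝕜] [AddCommGroup F] [Module 𝕜 F] [Module ℝ F]
  [IsScalarTower ℝ 𝕜 F] [UniformSpace F] [IsUniformAddGroup F] [ContinuousSMul 𝕜 F]

def DualKappa.transpose (P : F →L[𝕜] F) : DualKappa 𝕜 F →L[𝕜] DualKappa 𝕜 F :=
  ContinuousLinearMap.precompUniformConvergenceCLM 𝕜 _ _ P (mapsTo_image_kappaSets P)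

variable {E : Type*} [AddCommGroup E] [Module 𝕜 E] [UniformSpace E] [IsUniformAddGroup E]
  [ContinuousSMul 𝕜 E]

def EpsilonProduct.compTranspose (u : EpsilonProduct 𝕜 F E) (P : F →L[𝕜] F) :
    EpsilonProduct 𝕜 F E :=
  ContinuousLinearMap.comp u (DualKappa.transpose P)

theorem EpsilonProduct.tendsto_compTranspose {ι : Type*} {l : Filter ι}
    (u : EpsilonProduct 𝕜 F E) {P : ι → F →L[𝕜] F}
    (hP : ∀ x, Tendsto (fun i => P i x) l (𝓝 x)) (hPeq : Equicontinuous fun i => ⇑(P i)) :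
    Tendsto (fun i => u.compTranspose (P i)) l (𝓝 u) := by
  rw [UniformConvergenceCLM.tendsto_iff_tendstoUniformlyOn]
  intro H hH
  have hPK : ∀ K ∈ kappaSets 𝕜 F, TendstoUniformlyOn (fun i => ⇑(P i)) id l K := fun K hK =>
    (hPeq.equicontinuousOn K).tendstoUniformlyOn_of_tendsto hK.1 fun x _ => hP x
  have hT : TendstoUniformlyOn (fun i => DualKappa.transpose (P i)) id l H :=
    UniformConvergenceCLM.tendstoUniformlyOn_of_apply_eq_comp (hH 0) hPK fun _ _ _ => rfl
  exact (uniformContinuous_addMonoidHom_of_continuous (map_continuous u)).comp_tendstoUniformlyOn hT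

theorem EpsilonProduct.compTranspose_schauderPartialSum_apply (u : EpsilonProduct 𝕜 F E)
    (f : ℕ → F) (lam : ℕ → F →L[𝕜] 𝕜) (k : ℕ) (φ : F →L[𝕜] 𝕜) :
    u.compTranspose (schauderPartialSum f lam k) φ =
      ∑ n ∈ Finset.range k, φ (f n) • u (lam n) := by
  -- `DualKappa 𝕜 F` is a type synonym for `F →L[𝕜] 𝕜`; `ofFun` and `change` cross between them.
  have hφ : DualKappa.transpose (schauderPartialSum f lam k) φ =
      ∑ n ∈ Finset.range k, φ (f n) • UniformConvergenceCLM.ofFun _ _ (kappaSets 𝕜 F) (lam n) := by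
    ext x
    change φ (schauderPartialSum f lam k x) =
      (∑ n ∈ Finset.range k, φ (f n) • lam n : F →L[𝕜] 𝕜) x
    simp [coe_schauderPartialSum, mul_comm]
  change u (DualKappa.transpose _ φ) = _
  rw [hφ, map_sum]
  simp only [map_smul]
  rfl

end Transpose

theorem stmt6_general {𝕜 Ω FF FE E : Type*} [RCLike 𝕜]
    [FunLike FF Ω 𝕜] [AddCommGroup FF] [Module 𝕜 FF] [UniformSpace FF]
    [IsUniformAddGroup FF] [ContinuousSMul 𝕜 FF] [Module ℝ FF]
    [IsScalarTower ℝ 𝕜 FF]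
    [AddCommGroup E] [Module 𝕜 E] [UniformSpace E] [IsUniformAddGroup E]
    [ContinuousSMul 𝕜 E]
    [FunLike FE Ω E] [AddCommGroup FE] [Module 𝕜 FE] [UniformSpace FE]
    -- the point evaluations `δₓ ∈ F(Ω)'`:
    (δ : Ω → (FF →L[𝕜] 𝕜)) (hδ : ∀ (x : Ω) (g : FF), δ x g = g x)
    -- ε-compatibility: `S` is a linear topological isomorphism
    (S : EpsilonProduct 𝕜 FF E ≃L[𝕜] FE)
    (hS : ∀ (u : EpsilonProduct 𝕜 FF E) (x : Ω), S u x = u (δ x))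
    -- `(fₙ)` is an equicontinuous Schauder basis of `F(Ω)` with functionals `(λₙᴷ)`:
    (f : ℕ → FF) (lam : ℕ → FF →L[𝕜] 𝕜)
    (hrepr : ∀ x : FF,
      Tendsto (fun k => ∑ n ∈ Finset.range k, lam n x • f n) atTop (𝓝 x))
    (hequi : Equicontinuous
      (fun k : ℕ => fun x : FF => ∑ n ∈ Finset.range k, lam n x • f n))
    -- the maps `λₙᴱ` are compatible with the coefficient functionals:
    (lamE : ℕ → FE → E)
    (hlamE : ∀ (u : EpsilonProduct 𝕜 FF E) (n : ℕ), lamE n (S u) = u (lam n)) :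
    ∀ g : FE, ∃ psum : ℕ → FE,
      (∀ (k : ℕ) (x : Ω), psum k x = ∑ n ∈ Finset.range k, f n x • lamE n g) ∧
      Tendsto psum atTop (𝓝 g) := by
  intro g
  set u := S.symm g
  have hu : S u = g := S.apply_symm_apply g
  let P := schauderPartialSum f lam
  refine ⟨fun k => S (u.compTranspose (P k)), fun k x => ?_, ?_⟩
  · rw [hS]
    refine (EpsilonProduct.compTranspose_schauderPartialSum_apply u f lam k (δ x)).trans ?_
    simp [hδ, ← hu, hlamE]
  · have hlim := EpsilonProduct.tendsto_compTranspose u (P := P)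
      (by simpa [P, coe_schauderPartialSum] using hrepr)
      (by simpa [P, coe_schauderPartialSum] using hequi)
    exact hu ▸ (S.continuous.tendsto u).comp hlim

/-- Let `F(Ω)` and `F(Ω,E)` be ε-compatible, i.e. `S : F(Ω) ε E → F(Ω,E)`,
`S(u)(x) = u(δₓ)`, is a (linear topological) isomorphism, let `(fₙ)` be an equicontinuous
Schauder basis of `F(Ω)` with coefficient functionals `(λₙᴷ)`, and let `λₙᴱ : F(Ω,E) → E`
satisfy `λₙᴱ(S(u)) = u(λₙᴷ)`.  Then every `f ∈ F(Ω,E)` has the convergent series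
representation `f = Σₙ λₙᴱ(f) • fₙ` in `F(Ω,E)`. -/
theorem stmt6 {𝕜 Ω FF FE E : Type*} [RCLike 𝕜]
    [FunLike FF Ω 𝕜] [AddCommGroup FF] [Module 𝕜 FF] [UniformSpace FF]
    [IsUniformAddGroup FF] [ContinuousSMul 𝕜 FF] [T2Space FF] [Module ℝ FF]
    [IsScalarTower ℝ 𝕜 FF] [LocallyConvexSpace ℝ FF]
    [AddCommGroup E] [Module 𝕜 E] [UniformSpace E] [IsUniformAddGroup E]
    [ContinuousSMul 𝕜 E] [T2Space E] [Module ℝ E] [IsScalarTower ℝ 𝕜 E]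
    [LocallyConvexSpace ℝ E]
    [FunLike FE Ω E] [AddCommGroup FE] [Module 𝕜 FE] [UniformSpace FE]
    [IsUniformAddGroup FE] [ContinuousSMul 𝕜 FE] [T2Space FE] [Module ℝ FE]
    [IsScalarTower ℝ 𝕜 FE] [LocallyConvexSpace ℝ FE]
    -- the point evaluations `δₓ ∈ F(Ω)'`:
    (δ : Ω → (FF →L[𝕜] 𝕜)) (hδ : ∀ (x : Ω) (g : FF), δ x g = g x)
    -- ε-compatibility: `S` is a linear topological isomorphism
    (S : EpsilonProduct 𝕜 FF E ≃L[𝕜] FE)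
    (hS : ∀ (u : EpsilonProduct 𝕜 FF E) (x : Ω), S u x = u (δ x))
    -- `(fₙ)` is an equicontinuous Schauder basis of `F(Ω)` with functionals `(λₙᴷ)`:
    (f : ℕ → FF) (lam : ℕ → FF →L[𝕜] 𝕜)
    (hrepr : ∀ x : FF,
      Tendsto (fun k => ∑ n ∈ Finset.range k, lam n x • f n) atTop (𝓝 x))
    (huniq : ∀ (x : FF) (c : ℕ → 𝕜),
      Tendsto (fun k => ∑ n ∈ Finset.range k, c n • f n) atTop (𝓝 x) →
        c = fun n => lam n x)
    (hequi : Equicontinuous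
      (fun k : ℕ => fun x : FF => ∑ n ∈ Finset.range k, lam n x • f n))
    -- the maps `λₙᴱ` are compatible with the coefficient functionals:
    (lamE : ℕ → FE → E)
    (hlamE : ∀ (u : EpsilonProduct 𝕜 FF E) (n : ℕ), lamE n (S u) = u (lam n)) :
    ∀ g : FE, ∃ psum : ℕ → FE,
      (∀ (k : ℕ) (x : Ω), psum k x = ∑ n ∈ Finset.range k, f n x • lamE n g) ∧
      Tendsto psum atTop (𝓝 g) :=
  stmt6_general δ hδ S hS f lam hrepr hequi lamE hlamE
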